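/- arXiv:2512.22546 — 10 statements merged into one kernel-verified Lean document; each statement's English description precedes it below -/
import Mathlib

section
/- Let a, r1, r2, r3 be real numbers with a > 0 and r1 < r2 < r3, and let Q : ℝ → ℝ be a differentiable function whose derivative is Q'(x) = 4a(x − r1)(x − r2)(x − r3) for all x. If 2r2 − r1 − r3 = 0, then both r1 and r3 are global minimizers of Q, i.e., Q(r1) = Q(r3) ≤ Q(x) for all x ∈ ℝ. -/
/-! When `2 r₂ = r₁ + r₃`, the derivative `4a(x - r₁)(x - r₂)(x - r₃)` is exactly the derivative
of `a ((x - r₁)(x - r₃))²`, so `Q` is that nonnegative double well shifted by the constant `Q r₁`;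
it vanishes at both `r₁` and `r₃`. -/

theorem hasDerivAt_mul_sq_sub_mul_sub {𝕜 : Type*} [NontriviallyNormedField 𝕜] (a p q x : 𝕜) :
    HasDerivAt (fun x => a * ((x - p) * (x - q)) ^ 2)
      (2 * a * (x - p) * (x - q) * (2 * x - p - q)) x := by
  have h := ((((hasDerivAt_id x).sub_const p).mul ((hasDerivAt_id x).sub_const q)).pow 2).const_mul a
  refine h.congr_deriv ?_
  simp only [id, Pi.mul_apply]
  push_cast
  ring

theorem eq_add_mul_sq_of_deriv_eq {𝕜 : Type*} [RCLike 𝕜] {Q : 𝕜 → 𝕜} {a p q : 𝕜}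
    (hQ : Differentiable 𝕜 Q) (hQ' : ∀ x, deriv Q x = 2 * a * (x - p) * (x - q) * (2 * x - p - q))
    (x : 𝕜) : Q x = Q p + a * ((x - p) * (x - q)) ^ 2 := by
  have hwell (y : 𝕜) := (hasDerivAt_mul_sq_sub_mul_sub a p q y).const_add (Q p)
  refine isOpen_univ.eqOn_of_deriv_eq isPreconnected_univ hQ.differentiableOn
    (fun y _ => (hwell y).differentiableAt.differentiableWithinAt)
    (fun y _ => by rw [hQ', (hwell y).deriv]) (Set.mem_univ p) (by simp) (Set.mem_univ x)

theorem stmt_1_general (a r₁ r₂ r₃ : ℝ) (ha : 0 < a)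
    (Q : ℝ → ℝ) (hQ : Differentiable ℝ Q)
    (hQ' : ∀ x : ℝ, deriv Q x = 4 * a * (x - r₁) * (x - r₂) * (x - r₃))
    (h : 2 * r₂ - r₁ - r₃ = 0) :
    Q r₁ = Q r₃ ∧ ∀ x : ℝ, Q r₁ ≤ Q x := by
  have hQ_well : ∀ x, Q x = Q r₁ + a * ((x - r₁) * (x - r₃)) ^ 2 :=
    eq_add_mul_sq_of_deriv_eq hQ fun x => by
      rw [hQ' x]
      linear_combination (-2 * a * (x - r₁) * (x - r₃)) * h
  refine ⟨by simpa using (hQ_well r₃).symm, fun x => ?_⟩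
  rw [hQ_well x]
  exact le_add_of_nonneg_right (by positivity)

/-- If `2r₂ − r₁ − r₃ = 0`, then both `r₁` and `r₃` are global
minimizers of `Q`. -/
theorem stmt_1 (a r₁ r₂ r₃ : ℝ) (ha : 0 < a) (h₁₂ : r₁ < r₂) (h₂₃ : r₂ < r₃)
    (Q : ℝ → ℝ) (hQ : Differentiable ℝ Q)
    (hQ' : ∀ x : ℝ, deriv Q x = 4 * a * (x - r₁) * (x - r₂) * (x - r₃))
    (h : 2 * r₂ - r₁ - r₃ = 0) :
    Q r₁ = Q r₃ ∧ ∀ x : ℝ, Q r₁ ≤ Q x :=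
  stmt_1_general a r₁ r₂ r₃ ha Q hQ hQ' h
end

section
/- Let a, r1, r2, r3 be real numbers with a > 0 and r1 < r2 < r3, and let Q : ℝ → ℝ be a differentiable function whose derivative is Q'(x) = 4a(x − r1)(x − r2)(x − r3) for all x. If 2r2 − r1 − r3 < 0, then r3 is the unique global minimizer of Q, i.e., Q(r3) < Q(x) for all x ≠ r3. -/
/-!
Integrating `Q'` from `r₃` gives `Q x - Q r₃ = a y² (y² - (4/3)(p + q) y + 2pq)` with `y = x - r₃`,
`p = r₁ - r₃`, `q = r₂ - r₃`. Completing the square, the quadratic factor is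
`(y - (2/3)(p + q))² + (2/9)(q - 2p)(p - 2q)`, and `2r₂ - r₁ - r₃ < 0` is exactly `p - 2q > 0`,
which together with `r₁ < r₂` also gives `q - 2p > 0`.
-/

noncomputable def cubicPrimitive (a r₁ r₂ r₃ x : ℝ) : ℝ :=
  a * (x - r₃) ^ 2 * ((x - r₃) ^ 2 - 4 / 3 * ((r₁ - r₃) + (r₂ - r₃)) * (x - r₃)
    + 2 * (r₁ - r₃) * (r₂ - r₃))

theorem hasDerivAt_cubicPrimitive (a r₁ r₂ r₃ x : ℝ) :
    HasDerivAt (cubicPrimitive a r₁ r₂ r₃) (4 * a * (x - r₁) * (x - r₂) * (x - r₃)) x := by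
  have hy : HasDerivAt (fun x : ℝ => x - r₃) 1 x := (hasDerivAt_id x).sub_const r₃
  have := ((hy.fun_pow 2).const_mul a).fun_mul
    (((hy.fun_pow 2).fun_sub (hy.const_mul (4 / 3 * ((r₁ - r₃) + (r₂ - r₃))))).add_const
      (2 * (r₁ - r₃) * (r₂ - r₃)))
  exact this.congr_deriv (by norm_num; ring)

theorem cubicPrimitive_pos {a r₁ r₂ r₃ x : ℝ} (ha : 0 < a) (h₁₂ : r₁ < r₂)
    (h : 2 * r₂ - r₁ - r₃ < 0) (hx : x ≠ r₃) : 0 < cubicPrimitive a r₁ r₂ r₃ x := by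
  set p := r₁ - r₃
  set q := r₂ - r₃
  have hquad : (x - r₃) ^ 2 - 4 / 3 * (p + q) * (x - r₃) + 2 * p * q
      = (x - r₃ - 2 / 3 * (p + q)) ^ 2 + 2 / 9 * (q - 2 * p) * (p - 2 * q) := by ring
  have hqp : 0 < q - 2 * p := by linarith
  have hpq : 0 < p - 2 * q := by linarith
  have hy : 0 < (x - r₃) ^ 2 := sq_pos_iff.mpr (sub_ne_zero.mpr hx)
  unfold cubicPrimitive
  rw [hquad]
  positivity

theorem sub_eq_cubicPrimitive {a r₁ r₂ r₃ : ℝ} {Q : ℝ → ℝ} (hQ : Differentiable ℝ Q)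
    (hQ' : ∀ x : ℝ, deriv Q x = 4 * a * (x - r₁) * (x - r₂) * (x - r₃)) (x : ℝ) :
    Q x - Q r₃ = cubicPrimitive a r₁ r₂ r₃ x := by
  have hP := hasDerivAt_cubicPrimitive a r₁ r₂ r₃
  have hconst := is_const_of_deriv_eq_zero (hQ.sub fun y => (hP y).differentiableAt)
    fun y => by rw [deriv_sub (hQ y) (hP y).differentiableAt, hQ' y, (hP y).deriv, sub_self]
  have hP₃ : cubicPrimitive a r₁ r₂ r₃ r₃ = 0 := by simp [cubicPrimitive]
  have := hconst x r₃
  simp only [Pi.sub_apply, hP₃, sub_zero] at this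
  linarith

theorem stmt_2_general (a r₁ r₂ r₃ : ℝ) (ha : 0 < a) (h₁₂ : r₁ < r₂)
    (Q : ℝ → ℝ) (hQ : Differentiable ℝ Q)
    (hQ' : ∀ x : ℝ, deriv Q x = 4 * a * (x - r₁) * (x - r₂) * (x - r₃))
    (h : 2 * r₂ - r₁ - r₃ < 0) :
    ∀ x : ℝ, x ≠ r₃ → Q r₃ < Q x := by
  intro x hx
  have := cubicPrimitive_pos ha h₁₂ h hx
  rw [← sub_eq_cubicPrimitive hQ hQ' x] at this
  linarith

/-- If `2r₂ − r₁ − r₃ < 0`, then `r₃` is the unique global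
minimizer of `Q`. -/
theorem stmt_2 (a r₁ r₂ r₃ : ℝ) (ha : 0 < a) (h₁₂ : r₁ < r₂) (h₂₃ : r₂ < r₃)
    (Q : ℝ → ℝ) (hQ : Differentiable ℝ Q)
    (hQ' : ∀ x : ℝ, deriv Q x = 4 * a * (x - r₁) * (x - r₂) * (x - r₃))
    (h : 2 * r₂ - r₁ - r₃ < 0) :
    ∀ x : ℝ, x ≠ r₃ → Q r₃ < Q x :=
  stmt_2_general a r₁ r₂ r₃ ha h₁₂ Q hQ hQ' h
end

section
/- Let a, r1, r2, r3 be real numbers with a > 0 and r1 < r2 < r3, and let Q : ℝ → ℝ be a differentiable function whose derivative is Q'(x) = 4a(x − r1)(x − r2)(x − r3) for all x. If 2r2 − r1 − r3 > 0, then r1 is the unique global minimizer of Q, i.e., Q(r1) < Q(x) for all x ≠ r1. -/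
/-!
`Q` differs by a constant from the quartic antiderivative `P` of `Q'` with `P r₁ = 0`, which has a
double root at `r₁`. Completing the square in the quadratic cofactor of `(x - r₁)²` leaves the
constant `2 (2r₂ - r₁ - r₃)(2r₃ - r₁ - r₂) / 9`, and both of its factors are positive, so `P > 0`
away from `r₁`.
-/

noncomputable def cubicAntideriv (a r₁ r₂ r₃ x : ℝ) : ℝ :=
  a * (x - r₁) ^ 2 *
    ((x - (2 * r₂ + 2 * r₃ - r₁) / 3) ^ 2 + 2 * (2 * r₂ - r₁ - r₃) * (2 * r₃ - r₁ - r₂) / 9)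

theorem hasDerivAt_cubicAntideriv (a r₁ r₂ r₃ x : ℝ) :
    HasDerivAt (cubicAntideriv a r₁ r₂ r₃) (4 * a * (x - r₁) * (x - r₂) * (x - r₃)) x := by
  set m := (2 * r₂ + 2 * r₃ - r₁) / 3
  set k := 2 * (2 * r₂ - r₁ - r₃) * (2 * r₃ - r₁ - r₂) / 9
  have h : HasDerivAt (fun y ↦ a * (y - r₁) ^ 2 * ((y - m) ^ 2 + k))
      (a * (2 * (x - r₁) ^ 1 * 1) * ((x - m) ^ 2 + k) + a * (x - r₁) ^ 2 * (2 * (x - m) ^ 1 * 1))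
      x :=
    ((((hasDerivAt_id' x).sub_const r₁).pow 2).const_mul a).mul
      ((((hasDerivAt_id' x).sub_const m).pow 2).add_const k)
  exact h.congr_deriv (by simp only [m, k]; ring)

theorem cubicAntideriv_pos {a r₁ r₂ r₃ x : ℝ} (ha : 0 < a) (h₂ : 0 < 2 * r₂ - r₁ - r₃)
    (h₃ : 0 < 2 * r₃ - r₁ - r₂) (hx : x ≠ r₁) : 0 < cubicAntideriv a r₁ r₂ r₃ x := by
  have hsq : 0 < (x - r₁) ^ 2 := sq_pos_of_ne_zero (sub_ne_zero.mpr hx)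
  unfold cubicAntideriv
  positivity

theorem sub_eq_cubicAntideriv {a r₁ r₂ r₃ : ℝ} {Q : ℝ → ℝ} (hQ : Differentiable ℝ Q)
    (hQ' : ∀ x, deriv Q x = 4 * a * (x - r₁) * (x - r₂) * (x - r₃)) (x : ℝ) :
    Q x - Q r₁ = cubicAntideriv a r₁ r₂ r₃ x := by
  have hP := hasDerivAt_cubicAntideriv a r₁ r₂ r₃
  have hconst := is_const_of_deriv_eq_zero (f := Q - cubicAntideriv a r₁ r₂ r₃)
    (hQ.sub fun y ↦ (hP y).differentiableAt)
    (fun y ↦ by rw [((hQ y).hasDerivAt.sub (hP y)).deriv, hQ', sub_self]) x r₁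
  have hP₁ : cubicAntideriv a r₁ r₂ r₃ r₁ = 0 := by simp [cubicAntideriv]
  simp only [Pi.sub_apply, hP₁] at hconst
  linarith

theorem stmt_3_general (a r₁ r₂ r₃ : ℝ) (ha : 0 < a) (h₂₃ : r₂ < r₃)
    (Q : ℝ → ℝ) (hQ : Differentiable ℝ Q)
    (hQ' : ∀ x : ℝ, deriv Q x = 4 * a * (x - r₁) * (x - r₂) * (x - r₃))
    (h : 2 * r₂ - r₁ - r₃ > 0) :
    ∀ x : ℝ, x ≠ r₁ → Q r₁ < Q x := by
  intro x hx
  have hpos := cubicAntideriv_pos ha h (by linarith) hx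
  linarith [sub_eq_cubicAntideriv hQ hQ' x]

/-- If `2r₂ − r₁ − r₃ > 0`, then `r₁` is the unique global
minimizer of `Q`. -/
theorem stmt_3 (a r₁ r₂ r₃ : ℝ) (ha : 0 < a) (h₁₂ : r₁ < r₂) (h₂₃ : r₂ < r₃)
    (Q : ℝ → ℝ) (hQ : Differentiable ℝ Q)
    (hQ' : ∀ x : ℝ, deriv Q x = 4 * a * (x - r₁) * (x - r₂) * (x - r₃))
    (h : 2 * r₂ - r₁ - r₃ > 0) :
    ∀ x : ℝ, x ≠ r₁ → Q r₁ < Q x :=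
  stmt_3_general a r₁ r₂ r₃ ha h₂₃ Q hQ hQ' h
end

section
/- Let s(x) = αx² + βx + γ with α ≠ 0, let S = {(x, s(x)) : x ∈ ℝ} ⊆ ℝ², and let (x̄, ȳ) ∈ ℝ² with ȳ ≠ s(x̄). Set p := −(β² + 4αȳ − 4αγ − 2)/(4α²), q := −(2αx̄ + β)/(4α³), and Δ := (p/3)³ + (q/2)². If p < 0 and Δ = 0, then the set of points of S nearest to (x̄, ȳ) (in the Euclidean distance of ℝ²) is the singleton {(x₂, s(x₂))}, where x₂ := −β/(2α) + 3(2αx̄ + β)/(α(β² + 4αȳ − 4αγ − 2)). -/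
/-- projection onto the graph of `s(x) = αx² + βx + γ` in the case
`p < 0` and `Δ = 0`. -/
theorem stmt_7 (α β γ xb yb p q Δ x₂ : ℝ) (hα : α ≠ 0)
    (hy : yb ≠ α * xb ^ 2 + β * xb + γ)
    (hp : p = -(β ^ 2 + 4 * α * yb - 4 * α * γ - 2) / (4 * α ^ 2))
    (hq : q = -(2 * α * xb + β) / (4 * α ^ 3))
    (hΔ : Δ = (p / 3) ^ 3 + (q / 2) ^ 2)
    (hx₂ : x₂ = -β / (2 * α) +
        3 * (2 * α * xb + β) / (α * (β ^ 2 + 4 * α * yb - 4 * α * γ - 2)))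
    (hcase : p < 0 ∧ Δ = 0) :
    {z : ℝ × ℝ | (∃ x : ℝ, z = (x, α * x ^ 2 + β * x + γ)) ∧
        ∀ w : ℝ, Real.sqrt ((xb - z.1) ^ 2 + (yb - z.2) ^ 2) ≤
          Real.sqrt ((xb - w) ^ 2 + (yb - (α * w ^ 2 + β * w + γ)) ^ 2)} =
      {(x₂, α * x₂ ^ 2 + β * x₂ + γ)} := by
  obtain ⟨hp0, hΔ0⟩ := hcase
  have hpne : p ≠ 0 := ne_of_lt hp0
  have hq2 : q ^ 2 = -4 * p ^ 3 / 27 := by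
    rw [hΔ] at hΔ0; linear_combination 4 * hΔ0
  have hqne : q ≠ 0 := by
    intro h
    rw [h] at hq2
    have : p ^ 3 = 0 := by linarith [hq2]
    exact hpne (pow_eq_zero_iff (by norm_num) |>.mp this)
  set a : ℝ := -3 * q / (2 * p) with ha
  have ha2 : a ^ 2 = -p / 3 := by
    rw [ha]; field_simp; linear_combination 27 * hq2
  have hpa : p = -3 * a ^ 2 := by rw [ha2]; ring
  have hqa : q = 2 * a ^ 3 := by
    have : a ^ 3 = a * a ^ 2 := by ring
    rw [this, ha2, ha]; field_simp
  have ha0 : a ≠ 0 := by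
    intro h; rw [h] at hpa; simp at hpa; linarith
  have ha2pos : 0 < a ^ 2 := lt_of_le_of_ne (sq_nonneg a) (Ne.symm (pow_ne_zero 2 ha0))
  have hp' : 4 * α ^ 2 * p = -(β ^ 2 + 4 * α * yb - 4 * α * γ - 2) := by
    rw [hp]; field_simp
  have hq' : 4 * α ^ 3 * q = -(2 * α * xb + β) := by
    rw [hq]; field_simp
  have hD : β ^ 2 + 4 * α * yb - 4 * α * γ - 2 = 12 * α ^ 2 * a ^ 2 := by
    linear_combination hp' - 4 * α ^ 2 * hpa
  have hxbE : 2 * α * xb + β = -8 * α ^ 3 * a ^ 3 := by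
    linear_combination hq' - 4 * α ^ 3 * hqa
  have hyb : yb = (12 * α ^ 2 * a ^ 2 - β ^ 2 + 4 * α * γ + 2) / (4 * α) := by
    field_simp; linear_combination hD
  have hxb : xb = (-8 * α ^ 3 * a ^ 3 - β) / (2 * α) := by
    field_simp; linear_combination hxbE
  have hx2a : x₂ = -β / (2 * α) - 2 * a := by
    rw [hx₂, hD, hxbE]
    field_simp
    ring
  have key : ∀ w : ℝ, (xb - w) ^ 2 + (yb - (α * w ^ 2 + β * w + γ)) ^ 2 =
      (xb - x₂) ^ 2 + (yb - (α * x₂ ^ 2 + β * x₂ + γ)) ^ 2 +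
        α ^ 2 * (w - x₂) ^ 2 * ((w - x₂ - 4 * a) ^ 2 + 2 * a ^ 2) := by
    intro w
    rw [hyb, hxb, hx2a]
    field_simp
    ring
  have hα2 : 0 < α ^ 2 := by positivity
  ext z
  simp only [Set.mem_setOf_eq, Set.mem_singleton_iff]
  constructor
  · rintro ⟨⟨x, rfl⟩, hmin⟩
    have h1 := hmin x₂
    simp only at h1
    rw [Real.sqrt_le_sqrt_iff (by positivity)] at h1
    have hx : x = x₂ := by
      by_contra hne
      have hxp : 0 < (x - x₂) ^ 2 :=
        lt_of_le_of_ne (sq_nonneg _) (Ne.symm (pow_ne_zero 2 (sub_ne_zero.mpr hne)))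
      have h2 : 0 < (x - x₂ - 4 * a) ^ 2 + 2 * a ^ 2 := by positivity
      have h3 := key x
      have h4 : 0 < α ^ 2 * (x - x₂) ^ 2 * ((x - x₂ - 4 * a) ^ 2 + 2 * a ^ 2) :=
        mul_pos (mul_pos hα2 hxp) h2
      linarith
    rw [hx]
  · rintro rfl
    refine ⟨⟨x₂, rfl⟩, fun w => Real.sqrt_le_sqrt ?_⟩
    simp only
    rw [key w]
    have h4 : 0 ≤ α ^ 2 * (w - x₂) ^ 2 * ((w - x₂ - 4 * a) ^ 2 + 2 * a ^ 2) :=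
      mul_nonneg (mul_nonneg hα2.le (sq_nonneg (w - x₂))) (by positivity)
    linarith
end

section
/- Let s(x) = αx² + βx + γ with α ≠ 0, let S = {(x, s(x)) : x ∈ ℝ} ⊆ ℝ², and let (x̄, ȳ) ∈ ℝ² with ȳ ≠ s(x̄). Set p := −(β² + 4αȳ − 4αγ − 2)/(4α²), q := −(2αx̄ + β)/(4α³), and Δ := (p/3)³ + (q/2)². If Δ < 0 and x̄ = −β/(2α), then the set of points of S nearest to (x̄, ȳ) (in the Euclidean distance of ℝ²) is exactly the two-element set {(x₃⁺, s(x₃⁺)), (x₃⁻, s(x₃⁻))}, where x₃^± := −β/(2α) ± √(−p). -/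
set_option maxHeartbeats 1000000


/-- projection onto the graph of `s(x) = αx² + βx + γ` in the case
`Δ < 0` and `x̄ = −β/(2α)`: the nearest-point set is the two-element set
`{(x₃⁺, s(x₃⁺)), (x₃⁻, s(x₃⁻))}` with `x₃^± = −β/(2α) ± √(−p)`. -/
theorem stmt_8 (α β γ xb yb p q Δ x₃p x₃m : ℝ) (hα : α ≠ 0)
    (hy : yb ≠ α * xb ^ 2 + β * xb + γ)
    (hp : p = -(β ^ 2 + 4 * α * yb - 4 * α * γ - 2) / (4 * α ^ 2))
    (hq : q = -(2 * α * xb + β) / (4 * α ^ 3))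
    (hΔ : Δ = (p / 3) ^ 3 + (q / 2) ^ 2)
    (hx₃p : x₃p = -β / (2 * α) + Real.sqrt (-p))
    (hx₃m : x₃m = -β / (2 * α) - Real.sqrt (-p))
    (hcase : Δ < 0 ∧ xb = -β / (2 * α)) :
    {z : ℝ × ℝ | (∃ x : ℝ, z = (x, α * x ^ 2 + β * x + γ)) ∧
        ∀ w : ℝ, Real.sqrt ((xb - z.1) ^ 2 + (yb - z.2) ^ 2) ≤
          Real.sqrt ((xb - w) ^ 2 + (yb - (α * w ^ 2 + β * w + γ)) ^ 2)} =
      {(x₃p, α * x₃p ^ 2 + β * x₃p + γ), (x₃m, α * x₃m ^ 2 + β * x₃m + γ)} := by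
  obtain ⟨hΔ0, hxb⟩ := hcase
  have hp0 : p < 0 := by
    have hq' : q = 0 := by rw [hq, hxb]; field_simp; ring
    rw [hΔ, hq'] at hΔ0
    by_contra h
    push_neg at h
    nlinarith [pow_nonneg h 3]
  have hnp : 0 ≤ -p := by linarith
  have hsqrt : Real.sqrt (-p) ^ 2 = -p := Real.sq_sqrt hnp
  have hup : x₃p - xb = Real.sqrt (-p) := by rw [hx₃p, hxb]; ring
  have hum : x₃m - xb = -Real.sqrt (-p) := by rw [hx₃m, hxb]; ring
  have hsp : (x₃p - xb) ^ 2 = -p := by rw [hup]; exact hsqrt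
  have hsm : (x₃m - xb) ^ 2 = -p := by
    rw [hum, show (-Real.sqrt (-p)) ^ 2 = Real.sqrt (-p) ^ 2 by ring]; exact hsqrt
  set K : ℝ := (yb - (α * xb ^ 2 + β * xb + γ)) ^ 2 - α ^ 2 * p ^ 2 with hK
  have key : ∀ x : ℝ, (xb - x) ^ 2 + (yb - (α * x ^ 2 + β * x + γ)) ^ 2
      = α ^ 2 * ((x - xb) ^ 2 + p) ^ 2 + K := by
    intro x
    rw [hK, hp, hxb]
    field_simp
    ring
  have hKp : (xb - x₃p) ^ 2 + (yb - (α * x₃p ^ 2 + β * x₃p + γ)) ^ 2 = K := by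
    rw [key x₃p, hsp]; ring
  have hKm : (xb - x₃m) ^ 2 + (yb - (α * x₃m ^ 2 + β * x₃m + γ)) ^ 2 = K := by
    rw [key x₃m, hsm]; ring
  have hK0 : 0 ≤ K := by rw [← hKp]; positivity
  have hα2 : (0:ℝ) < α ^ 2 := by positivity
  ext z
  simp only [Set.mem_setOf_eq, Set.mem_insert_iff, Set.mem_singleton_iff]
  constructor
  · rintro ⟨⟨x, rfl⟩, hmin⟩
    simp only at hmin
    have h1 := hmin x₃p
    rw [hKp] at h1
    have h2 : (xb - x) ^ 2 + (yb - (α * x ^ 2 + β * x + γ)) ^ 2 ≤ K :=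
      (Real.sqrt_le_sqrt_iff hK0).mp h1
    have h3' : α ^ 2 * ((x - xb) ^ 2 + p) ^ 2 ≤ 0 := by linarith [key x]
    have h33 : α ^ 2 * ((x - xb) ^ 2 + p) ^ 2 = 0 :=
      le_antisymm h3' (by positivity)
    have hT0 : (x - xb) ^ 2 + p = 0 := by
      rcases mul_eq_zero.mp h33 with h | h
      · exact absurd h (by positivity)
      · exact pow_eq_zero_iff (two_ne_zero) |>.mp h
    have h4 : (x - xb) ^ 2 = -p := by linarith
    have h5 : (x - x₃p) * (x - x₃m) = 0 := by
      have e1 : x₃p = xb + Real.sqrt (-p) := by linarith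
      have e2 : x₃m = xb - Real.sqrt (-p) := by linarith
      rw [e1, e2]
      linear_combination h4 - hsqrt
    rcases mul_eq_zero.mp h5 with h | h
    · left
      have hx : x = x₃p := by linarith
      rw [hx]
    · right
      have hx : x = x₃m := by linarith
      rw [hx]
  · rintro (rfl | rfl)
    · refine ⟨⟨x₃p, rfl⟩, fun w => ?_⟩
      simp only
      rw [hKp]
      apply Real.sqrt_le_sqrt
      rw [key w]
      have : 0 ≤ α ^ 2 * ((w - xb) ^ 2 + p) ^ 2 := by positivity
      linarith
    · refine ⟨⟨x₃m, rfl⟩, fun w => ?_⟩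
      simp only
      rw [hKm]
      apply Real.sqrt_le_sqrt
      rw [key w]
      have : 0 ≤ α ^ 2 * ((w - xb) ^ 2 + p) ^ 2 := by positivity
      linarith
end

section
/- Let s(x) = αx² + βx + γ with α ≠ 0, let S = {(x, s(x)) : x ∈ ℝ} ⊆ ℝ², and let (x̄, ȳ) ∈ ℝ² with ȳ ≠ s(x̄). Set p := −(β² + 4αȳ − 4αγ − 2)/(4α²), q := −(2αx̄ + β)/(4α³), and Δ := (p/3)³ + (q/2)². If Δ < 0 and q < 0, then the set of points of S nearest to (x̄, ȳ) (in the Euclidean distance of ℝ²) is the singleton {(x₄, s(x₄))}, where x₄ := −β/(2α) + 2√(−p/3)·cos(θ/3) and θ := arccos((−q/2)/(−p/3)^{3/2}). -/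
/-!
Substituting `u = x + β/(2α)`, the squared distance from `(x̄, ȳ)` to `(x, s x)` is `α² g u` plus
a constant, where `g u = u⁴ + 2pu² + 4qu`; the critical points of `g` are the roots of the
depressed cubic `u³ + pu + q`. When `Δ < 0` this cubic has three real roots, given by Viète's
trigonometric formula through `cos 3φ = 4cos³φ - 3cos φ`; `x₄ + β/(2α)` is the one with `φ = θ/3`.
For a root `u₀` of the cubic, `g u - g u₀ = (u - u₀)² ((u + u₀)² + 2(u₀² + p))`, so `u₀` is the
strict global minimum of `g` as soon as `u₀² + p > 0`. For `u₀ = 2√(-p/3) cos(θ/3)` this means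
`4 cos²(θ/3) > 3`, i.e. `θ < π/2`, which is exactly the condition `q < 0`.
-/

open Real

def quartic (p q u : ℝ) : ℝ := u ^ 4 + 2 * p * u ^ 2 + 4 * q * u

lemma quartic_sub_quartic_of_cubic_root {p q u₀ : ℝ} (h : u₀ ^ 3 + p * u₀ + q = 0) (u : ℝ) :
    quartic p q u - quartic p q u₀ = (u - u₀) ^ 2 * ((u + u₀) ^ 2 + 2 * (u₀ ^ 2 + p)) := by
  unfold quartic
  linear_combination (4 * (u - u₀)) * h

lemma quartic_lt_quartic_of_cubic_root {p q u₀ u : ℝ} (h : u₀ ^ 3 + p * u₀ + q = 0)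
    (hpos : 0 < u₀ ^ 2 + p) (hu : u ≠ u₀) : quartic p q u₀ < quartic p q u := by
  have hdiff := quartic_sub_quartic_of_cubic_root h u
  have : 0 < (u - u₀) ^ 2 * ((u + u₀) ^ 2 + 2 * (u₀ ^ 2 + p)) :=
    mul_pos (sq_pos_of_ne_zero (sub_ne_zero.2 hu)) (by positivity)
  linarith

lemma trig_root_depressed_cubic (m θ : ℝ) :
    (2 * m * cos (θ / 3)) ^ 3 + (-3 * m ^ 2) * (2 * m * cos (θ / 3)) + (-2 * m ^ 3 * cos θ) = 0 := by
  have h := cos_three_mul (θ / 3)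
  rw [show 3 * (θ / 3) = θ by ring] at h
  linear_combination (-2 * m ^ 3) * h

lemma three_lt_four_mul_cos_div_three_sq {θ : ℝ} (h₀ : 0 ≤ θ) (h₁ : θ < π / 2) :
    3 < 4 * cos (θ / 3) ^ 2 := by
  have : 1 / 2 < cos (2 * (θ / 3)) := by
    rw [← cos_pi_div_three]
    exact cos_lt_cos_of_nonneg_of_le_pi_div_two (by positivity) (by linarith [pi_pos])
      (by linarith)
  rw [cos_sq]
  linarith

lemma cubic_root_and_sq_add_pos_of_trig {p q θ u : ℝ} (hΔ : (p / 3) ^ 3 + (q / 2) ^ 2 < 0)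
    (hq : q < 0) (hθ : θ = arccos ((-q / 2) / (-p / 3) ^ ((3 : ℝ) / 2)))
    (hu : u = 2 * √(-p / 3) * cos (θ / 3)) : u ^ 3 + p * u + q = 0 ∧ 0 < u ^ 2 + p := by
  have hp : 0 < -p / 3 := by nlinarith [sq_nonneg (q / 2), sq_nonneg (p / 3)]
  set m := √(-p / 3)
  have hm : 0 < m := sqrt_pos.2 hp
  have hm2 : m ^ 2 = -p / 3 := sq_sqrt hp.le
  have hm3 : (-p / 3) ^ ((3 : ℝ) / 2) = m ^ 3 := by
    rw [rpow_div_two_eq_sqrt _ hp.le]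
    exact_mod_cast rpow_natCast m 3
  have hlt : -q / 2 < m ^ 3 := by
    have hm6 : (m ^ 3) ^ 2 = (-p / 3) ^ 3 := by rw [← hm2]; ring
    refine abs_lt_of_sq_lt_sq' ?_ (by positivity) |>.2
    nlinarith
  have hcos : cos θ = (-q / 2) / m ^ 3 := by
    rw [hθ, hm3]
    exact cos_arccos (by linarith [div_pos (by linarith : 0 < -q / 2) (pow_pos hm 3)])
      ((div_le_one (by positivity)).2 hlt.le)
  have hθπ : θ < π / 2 := by
    rw [hθ, hm3, arccos_lt_pi_div_two]
    exact div_pos (by linarith) (by positivity)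
  have hθ0 : 0 ≤ θ := hθ ▸ arccos_nonneg _
  have hcos3 := three_lt_four_mul_cos_div_three_sq hθ0 hθπ
  have hp' : p = -3 * m ^ 2 := by linarith
  have hq' : q = -2 * m ^ 3 * cos θ := by rw [hcos]; field_simp
  refine ⟨hu ▸ hp' ▸ hq' ▸ trig_root_depressed_cubic m θ, ?_⟩
  rw [hu, hp']
  nlinarith [pow_pos hm 2]

lemma sq_dist_graph_eq_quartic {α β γ a b : ℝ} (hα : α ≠ 0) (x : ℝ) :
    (a - x) ^ 2 + (b - (α * x ^ 2 + β * x + γ)) ^ 2 =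
      α ^ 2 * quartic (-(β ^ 2 + 4 * α * b - 4 * α * γ - 2) / (4 * α ^ 2))
          (-(2 * α * a + β) / (4 * α ^ 3)) (x + β / (2 * α)) +
        ((a + β / (2 * α)) ^ 2 + (γ - β ^ 2 / (4 * α) - b) ^ 2) := by
  unfold quartic
  field_simp
  ring

lemma nearest_points_graph_eq_singleton (s : ℝ → ℝ) {a b x₀ : ℝ}
    (h : ∀ x ≠ x₀, (a - x₀) ^ 2 + (b - s x₀) ^ 2 < (a - x) ^ 2 + (b - s x) ^ 2) :
    {z : ℝ × ℝ | (∃ x : ℝ, z = (x, s x)) ∧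
        ∀ w : ℝ, √((a - z.1) ^ 2 + (b - z.2) ^ 2) ≤ √((a - w) ^ 2 + (b - s w) ^ 2)} =
      {(x₀, s x₀)} := by
  ext z
  simp only [Set.mem_ofPred_eq, Set.mem_singleton_iff]
  constructor
  · rintro ⟨⟨x, rfl⟩, hnear⟩
    by_contra hne
    have hx : x ≠ x₀ := fun hx => hne (hx ▸ rfl)
    exact (hnear x₀).not_gt ((sqrt_lt_sqrt_iff (by positivity)).2 (h x hx))
  · rintro rfl
    refine ⟨⟨x₀, rfl⟩, fun w => sqrt_le_sqrt ?_⟩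
    rcases eq_or_ne w x₀ with rfl | hw
    · exact le_rfl
    · exact (h w hw).le

theorem stmt_9_general (α β γ xb yb p q Δ θ x₄ : ℝ) (hα : α ≠ 0)
    (hp : p = -(β ^ 2 + 4 * α * yb - 4 * α * γ - 2) / (4 * α ^ 2))
    (hq : q = -(2 * α * xb + β) / (4 * α ^ 3))
    (hΔ : Δ = (p / 3) ^ 3 + (q / 2) ^ 2)
    (hθ : θ = Real.arccos ((-q / 2) / (-p / 3) ^ ((3 : ℝ) / 2)))
    (hx₄ : x₄ = -β / (2 * α) + 2 * Real.sqrt (-p / 3) * Real.cos (θ / 3))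
    (hcase : Δ < 0 ∧ q < 0) :
    {z : ℝ × ℝ | (∃ x : ℝ, z = (x, α * x ^ 2 + β * x + γ)) ∧
        ∀ w : ℝ, Real.sqrt ((xb - z.1) ^ 2 + (yb - z.2) ^ 2) ≤
          Real.sqrt ((xb - w) ^ 2 + (yb - (α * w ^ 2 + β * w + γ)) ^ 2)} =
      {(x₄, α * x₄ ^ 2 + β * x₄ + γ)} := by
  obtain ⟨hroot, hpos⟩ := cubic_root_and_sq_add_pos_of_trig (hΔ ▸ hcase.1) hcase.2 hθ
    (u := x₄ + β / (2 * α)) (by rw [hx₄]; ring)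
  refine nearest_points_graph_eq_singleton (fun x => α * x ^ 2 + β * x + γ) fun x hx => ?_
  simp only [sq_dist_graph_eq_quartic hα, ← hp, ← hq]
  have := quartic_lt_quartic_of_cubic_root hroot hpos (u := x + β / (2 * α)) (by simpa using hx)
  gcongr

/-- projection onto the graph of `s(x) = αx² + βx + γ` in the case
`Δ < 0` and `q < 0`. -/
theorem stmt_9 (α β γ xb yb p q Δ θ x₄ : ℝ) (hα : α ≠ 0)
    (hy : yb ≠ α * xb ^ 2 + β * xb + γ)
    (hp : p = -(β ^ 2 + 4 * α * yb - 4 * α * γ - 2) / (4 * α ^ 2))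
    (hq : q = -(2 * α * xb + β) / (4 * α ^ 3))
    (hΔ : Δ = (p / 3) ^ 3 + (q / 2) ^ 2)
    (hθ : θ = Real.arccos ((-q / 2) / (-p / 3) ^ ((3 : ℝ) / 2)))
    (hx₄ : x₄ = -β / (2 * α) + 2 * Real.sqrt (-p / 3) * Real.cos (θ / 3))
    (hcase : Δ < 0 ∧ q < 0) :
    {z : ℝ × ℝ | (∃ x : ℝ, z = (x, α * x ^ 2 + β * x + γ)) ∧
        ∀ w : ℝ, Real.sqrt ((xb - z.1) ^ 2 + (yb - z.2) ^ 2) ≤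
          Real.sqrt ((xb - w) ^ 2 + (yb - (α * w ^ 2 + β * w + γ)) ^ 2)} =
      {(x₄, α * x₄ ^ 2 + β * x₄ + γ)} :=
  stmt_9_general α β γ xb yb p q Δ θ x₄ hα hp hq hΔ hθ hx₄ hcase
end

section
/- Let s(x) = αx² + βx + γ with α ≠ 0, let S = {(x, s(x)) : x ∈ ℝ} ⊆ ℝ², and let (x̄, ȳ) ∈ ℝ² with ȳ ≠ s(x̄). Set p := −(β² + 4αȳ − 4αγ − 2)/(4α²), q := −(2αx̄ + β)/(4α³), and Δ := (p/3)³ + (q/2)². If Δ < 0 and q > 0, then the set of points of S nearest to (x̄, ȳ) (in the Euclidean distance of ℝ²) is the singleton {(x₅, s(x₅))}, where x₅ := −β/(2α) + 2√(−p/3)·cos((θ + 2π)/3) and θ := arccos((−q/2)/(−p/3)^{3/2}). -/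
set_option maxHeartbeats 1000000 in
/-- projection onto the graph of `s(x) = αx² + βx + γ` in the case
`Δ < 0` and `q > 0`. -/
theorem stmt_10 (α β γ xb yb p q Δ θ x₅ : ℝ) (hα : α ≠ 0)
    (hy : yb ≠ α * xb ^ 2 + β * xb + γ)
    (hp : p = -(β ^ 2 + 4 * α * yb - 4 * α * γ - 2) / (4 * α ^ 2))
    (hq : q = -(2 * α * xb + β) / (4 * α ^ 3))
    (hΔ : Δ = (p / 3) ^ 3 + (q / 2) ^ 2)
    (hθ : θ = Real.arccos ((-q / 2) / (-p / 3) ^ ((3 : ℝ) / 2)))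
    (hx₅ : x₅ = -β / (2 * α) +
        2 * Real.sqrt (-p / 3) * Real.cos ((θ + 2 * Real.pi) / 3))
    (hcase : Δ < 0 ∧ q > 0) :
    {z : ℝ × ℝ | (∃ x : ℝ, z = (x, α * x ^ 2 + β * x + γ)) ∧
        ∀ w : ℝ, Real.sqrt ((xb - z.1) ^ 2 + (yb - z.2) ^ 2) ≤
          Real.sqrt ((xb - w) ^ 2 + (yb - (α * w ^ 2 + β * w + γ)) ^ 2)} =
      {(x₅, α * x₅ ^ 2 + β * x₅ + γ)} := by
  obtain ⟨hΔneg, hqpos⟩ := hcase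
  have hΔ2 : (p / 3) ^ 3 + (q / 2) ^ 2 < 0 := hΔ ▸ hΔneg
  -- p is negative
  have hcube_neg : (p / 3) ^ 3 < 0 := by linarith [sq_nonneg (q / 2)]
  have hpneg : p < 0 := by
    by_contra h
    push_neg at h
    have : (0:ℝ) ≤ (p / 3) ^ 3 := by positivity
    linarith
  have hp3 : (0:ℝ) < -p / 3 := by linarith
  set r : ℝ := Real.sqrt (-p / 3) with hr_def
  have hr2 : r ^ 2 = -p / 3 := Real.sq_sqrt hp3.le
  have hrpos : 0 < r := Real.sqrt_pos.mpr hp3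
  have hr3pos : 0 < r ^ 3 := by positivity
  have hr3 : (-p / 3) ^ ((3 : ℝ) / 2) = r ^ 3 := by
    rw [← hr2, ← Real.rpow_natCast r 2, ← Real.rpow_mul hrpos.le,
      show ((2:ℕ):ℝ) * ((3:ℝ)/2) = ((3:ℕ):ℝ) by push_cast; ring, Real.rpow_natCast]
  set u : ℝ := (-q / 2) / r ^ 3 with hu_def
  -- bounds on u
  have hr32 : (r ^ 3) ^ 2 = (-p / 3) ^ 3 := by
    rw [show (r ^ 3) ^ 2 = (r ^ 2) ^ 3 by ring, hr2]
  have hr32' : (r ^ 3) ^ 2 = -((p / 3) ^ 3) := by rw [hr32]; ring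
  have hsqlt : (q / 2) ^ 2 < (r ^ 3) ^ 2 := by linarith
  have hq_lt : q / 2 < r ^ 3 := by
    by_contra h
    push_neg at h
    have h2 := mul_le_mul h h hr3pos.le (hr3pos.le.trans h)
    linarith [h2, hsqlt]
  have hu_gt : -1 < u := by
    rw [hu_def, lt_div_iff₀ hr3pos]; linarith
  have hu_lt : u < 0 := by
    rw [hu_def]
    exact div_neg_of_neg_of_pos (by linarith) hr3pos
  have hcosθ : Real.cos θ = u := by
    rw [hθ, hr3, ← hu_def]
    exact Real.cos_arccos (by linarith) (by linarith)
  set c : ℝ := Real.cos ((θ + 2 * Real.pi) / 3) with hc_def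
  have h3c : Real.cos (3 * ((θ + 2 * Real.pi) / 3)) = u := by
    rw [show 3 * ((θ + 2 * Real.pi) / 3) = θ + 2 * Real.pi by ring,
      Real.cos_add_two_pi, hcosθ]
  have h4c3 : 4 * c ^ 3 - 3 * c = u := by
    rw [← h3c, Real.cos_three_mul, ← hc_def]
  -- bounds on θ and the angle
  have hθπ2 : Real.pi / 2 < θ := by
    by_contra h
    push_neg at h
    rw [hθ] at h
    have h0 := Real.arccos_le_pi_div_two.mp h
    rw [hr3, ← hu_def] at h0
    linarith
  have hθπ : θ < Real.pi := by
    rcases lt_or_eq_of_le (Real.arccos_le_pi ((-q / 2) / (-p / 3) ^ ((3 : ℝ) / 2))) with h | h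
    · rw [hθ]; exact h
    · exfalso
      have h0 := Real.arccos_eq_pi.mp h
      rw [hr3, ← hu_def] at h0
      linarith
  have hφlo : 5 * Real.pi / 6 < (θ + 2 * Real.pi) / 3 := by linarith
  have hφhi : (θ + 2 * Real.pi) / 3 < Real.pi := by linarith [Real.pi_pos]
  have hcos56 : Real.cos (5 * Real.pi / 6) = -(Real.sqrt 3 / 2) := by
    rw [show 5 * Real.pi / 6 = Real.pi - Real.pi / 6 by ring, Real.cos_pi_sub,
      Real.cos_pi_div_six]
  have hc_lt : c < -(Real.sqrt 3 / 2) := by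
    rw [← hcos56, hc_def]
    exact Real.cos_lt_cos_of_nonneg_of_le_pi (by positivity) hφhi.le hφlo
  have hsqrt3 : Real.sqrt 3 ^ 2 = 3 := Real.sq_sqrt (by norm_num)
  have hc2 : 3 / 4 < c ^ 2 := by
    have hs2 : (0:ℝ) < Real.sqrt 3 / 2 := by
      have : (0:ℝ) < Real.sqrt 3 := Real.sqrt_pos.mpr (by norm_num)
      linarith
    have h1 : Real.sqrt 3 / 2 < -c := by linarith
    have h2 := mul_lt_mul h1 h1.le hs2 (by linarith : (0:ℝ) ≤ -c)
    linarith [h2, hsqrt3]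
  -- the critical point t5
  set t5 : ℝ := x₅ + β / (2 * α) with ht5_def
  have ht5 : t5 = 2 * r * c := by rw [ht5_def, hx₅]; ring
  have hcubic : t5 ^ 3 + p * t5 + q = 0 := by
    have hp' : p = -3 * r ^ 2 := by linarith
    have h4 : 2 * r ^ 3 * (4 * c ^ 3 - 3 * c) = -q := by
      rw [h4c3, hu_def]; field_simp
    rw [ht5, hp']
    linear_combination h4
  have hkey2 : 0 < t5 ^ 2 + p := by
    have hp' : p = -3 * r ^ 2 := by linarith
    have h43 : (0:ℝ) < 4 * c ^ 2 - 3 := by linarith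
    have hprod := mul_pos (mul_pos hrpos hrpos) h43
    rw [ht5, hp']; linarith [hprod]
  -- the quartic decomposition of the squared distance
  have hF : ∀ x : ℝ, (xb - x) ^ 2 + (yb - (α * x ^ 2 + β * x + γ)) ^ 2
      = α ^ 2 * ((x + β / (2 * α)) ^ 4 + 2 * p * (x + β / (2 * α)) ^ 2
          + 4 * q * (x + β / (2 * α)))
        + ((xb + β / (2 * α)) ^ 2 + (γ - β ^ 2 / (4 * α) - yb) ^ 2) := by
    intro x
    rw [hp, hq]
    field_simp
    ring
  -- main identity : F x - F x₅ = α² (x - x₅)² Q(x) with Q > 0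
  have hdiff : ∀ x : ℝ, (xb - x) ^ 2 + (yb - (α * x ^ 2 + β * x + γ)) ^ 2
      - ((xb - x₅) ^ 2 + (yb - (α * x₅ ^ 2 + β * x₅ + γ)) ^ 2)
      = α ^ 2 * ((x - x₅) ^ 2 * (((x + β / (2 * α)) + t5) ^ 2 + 2 * (t5 ^ 2 + p))) := by
    intro x
    rw [hF x, hF x₅, ht5_def]
    rw [ht5_def] at hcubic
    linear_combination (α ^ 2 * 4 * (x - x₅)) * hcubic
  have hQnn : ∀ y : ℝ, 0 ≤ y ^ 2 + 2 * (t5 ^ 2 + p) := fun y => by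
    have := sq_nonneg y; linarith
  have hQpos : ∀ y : ℝ, 0 < y ^ 2 + 2 * (t5 ^ 2 + p) := fun y => by
    have := sq_nonneg y; linarith
  have hle : ∀ x : ℝ, ((xb - x₅) ^ 2 + (yb - (α * x₅ ^ 2 + β * x₅ + γ)) ^ 2)
      ≤ (xb - x) ^ 2 + (yb - (α * x ^ 2 + β * x + γ)) ^ 2 := by
    intro x
    have h := hdiff x
    have hnn : 0 ≤ α ^ 2 * ((x - x₅) ^ 2
        * (((x + β / (2 * α)) + t5) ^ 2 + 2 * (t5 ^ 2 + p))) := by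
      apply mul_nonneg (sq_nonneg α)
      exact mul_nonneg (sq_nonneg _) (hQnn _)
    linarith
  ext z
  simp only [Set.mem_setOf_eq, Set.mem_singleton_iff]
  constructor
  · rintro ⟨⟨x, rfl⟩, hmin⟩
    have h1 := hmin x₅
    simp only at h1
    have h2 : (xb - x) ^ 2 + (yb - (α * x ^ 2 + β * x + γ)) ^ 2
        ≤ (xb - x₅) ^ 2 + (yb - (α * x₅ ^ 2 + β * x₅ + γ)) ^ 2 :=
      (Real.sqrt_le_sqrt_iff (by positivity)).mp h1
    have h3 := hdiff x
    have hx : x = x₅ := by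
      by_contra hne
      have hxne : x - x₅ ≠ 0 := sub_ne_zero.mpr hne
      have hsq : 0 < (x - x₅) ^ 2 := by positivity
      have hα2 : 0 < α ^ 2 := by positivity
      have hpos : 0 < α ^ 2 * ((x - x₅) ^ 2
          * (((x + β / (2 * α)) + t5) ^ 2 + 2 * (t5 ^ 2 + p))) := by
        apply mul_pos hα2
        exact mul_pos hsq (hQpos _)
      linarith
    rw [hx]
  · rintro rfl
    refine ⟨⟨x₅, rfl⟩, fun w => ?_⟩
    exact Real.sqrt_le_sqrt (hle w)
end

section
/- Let s(x) = αx² + βx + γ with α ≠ 0, let S = {(x, s(x)) : x ∈ ℝ} ⊆ ℝ², and let (x̄, ȳ) ∈ ℝ² with ȳ ≠ s(x̄). Set p := −(β² + 4αȳ − 4αγ − 2)/(4α²), q := −(2αx̄ + β)/(4α³), and Δ := (p/3)³ + (q/2)². If Δ < 0 and x̄ ≠ −β/(2α), then the set of points of S nearest to (x̄, ȳ) (in the Euclidean distance of ℝ²) is the singleton {(z₃, s(z₃))}, where z₃ := −β/(2α) − 2·sign(q)·√(−p/3)·cos(ϑ/3) and ϑ := arccos(|q/2| / (−p/3)^{3/2}),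 with sign(q) = 1 if q > 0 and sign(q) = −1 if q < 0. -/
set_option maxHeartbeats 1600000 in
/-- projection onto the graph of `s(x) = αx² + βx + γ` in the case
`Δ < 0` and `x̄ ≠ −β/(2α)`. -/
theorem stmt_12 (α β γ xb yb p q Δ ϑ z₃ : ℝ) (hα : α ≠ 0)
    (hy : yb ≠ α * xb ^ 2 + β * xb + γ)
    (hp : p = -(β ^ 2 + 4 * α * yb - 4 * α * γ - 2) / (4 * α ^ 2))
    (hq : q = -(2 * α * xb + β) / (4 * α ^ 3))
    (hΔ : Δ = (p / 3) ^ 3 + (q / 2) ^ 2)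
    (hϑ : ϑ = Real.arccos (|q / 2| / (-p / 3) ^ ((3 : ℝ) / 2)))
    (hz₃ : z₃ = -β / (2 * α) -
        2 * Real.sign q * Real.sqrt (-p / 3) * Real.cos (ϑ / 3))
    (hcase : Δ < 0 ∧ xb ≠ -β / (2 * α)) :
    {z : ℝ × ℝ | (∃ x : ℝ, z = (x, α * x ^ 2 + β * x + γ)) ∧
        ∀ w : ℝ, Real.sqrt ((xb - z.1) ^ 2 + (yb - z.2) ^ 2) ≤
          Real.sqrt ((xb - w) ^ 2 + (yb - (α * w ^ 2 + β * w + γ)) ^ 2)} =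
      {(z₃, α * z₃ ^ 2 + β * z₃ + γ)} := by
  obtain ⟨hΔneg, hxb⟩ := hcase
  -- q ≠ 0
  have hqne : q ≠ 0 := by
    rw [hq]
    intro h
    apply hxb
    have h4 : (4:ℝ) * α ^ 3 ≠ 0 := by positivity
    rw [div_eq_zero_iff] at h
    rcases h with h | h
    · have : 2 * α * xb + β = 0 := by linarith
      field_simp
      linarith
    · exact absurd h h4
  -- p < 0
  have hΔ' : (p / 3) ^ 3 + (q / 2) ^ 2 < 0 := by rw [← hΔ]; exact hΔneg
  have hpneg : p < 0 := by
    by_contra h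
    push_neg at h
    have : (0:ℝ) ≤ (p/3)^3 := by positivity
    nlinarith [sq_nonneg (q/2)]
  set m := Real.sqrt (-p / 3) with hmdef
  have hmpos : 0 < m := Real.sqrt_pos.2 (by linarith)
  have hm2 : m ^ 2 = -p / 3 := Real.sq_sqrt (by linarith)
  have hpval : p = -3 * m ^ 2 := by linarith
  have hm3pos : 0 < m ^ 3 := by positivity
  -- |q|/2 < m³
  have hm6 : (p / 3) ^ 3 = -(m ^ 3) ^ 2 := by rw [hpval]; ring
  have habslt : |q / 2| < m ^ 3 := by
    nlinarith [sq_abs (q / 2), abs_nonneg (q / 2), hΔ', hm6, hm3pos]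
  -- rpow
  have hrpow : (-p / 3 : ℝ) ^ ((3 : ℝ) / 2) = m ^ 3 := by
    rw [show ((3:ℝ)/2) = (1/2 : ℝ) * (3:ℕ) by norm_num,
      Real.rpow_mul (by linarith : (0:ℝ) ≤ -p/3), Real.rpow_natCast,
      ← Real.sqrt_eq_rpow]
  have hcosϑ : Real.cos ϑ = |q / 2| / m ^ 3 := by
    rw [hϑ, hrpow, Real.cos_arccos]
    · have h1 : (0:ℝ) ≤ |q/2| / m ^ 3 := by positivity
      linarith
    · rw [div_le_one hm3pos]; linarith
  have hcospos : 0 < Real.cos ϑ := by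
    rw [hcosϑ]
    have : 0 < |q / 2| := abs_pos.2 (by simpa using hqne)
    positivity
  have hϑ0 : 0 ≤ ϑ := by rw [hϑ]; exact Real.arccos_nonneg _
  have hϑpi : ϑ ≤ Real.pi := by rw [hϑ]; exact Real.arccos_le_pi _
  have hϑlt : ϑ < Real.pi / 2 := by
    by_contra h
    push_neg at h
    have := Real.cos_nonpos_of_pi_div_two_le_of_le h (by linarith)
    linarith
  set c := Real.cos (ϑ / 3) with hcdef
  have hcgt : Real.sqrt 3 / 2 < c := by
    have h1 : Real.cos (Real.pi / 6) < Real.cos (ϑ / 3) :=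
      Real.cos_lt_cos_of_nonneg_of_le_pi (by linarith) (by linarith [Real.pi_pos]) (by linarith)
    rwa [Real.cos_pi_div_six] at h1
  have hc34 : (3:ℝ)/4 < c ^ 2 := by
    have h3 : Real.sqrt 3 ^ 2 = 3 := Real.sq_sqrt (by norm_num)
    have h0 : (0:ℝ) < Real.sqrt 3 := Real.sqrt_pos.2 (by norm_num)
    nlinarith
  -- cubic value for u = 2 m c
  have h3m := Real.cos_three_mul (ϑ / 3)
  rw [show (3:ℝ) * (ϑ / 3) = ϑ by ring] at h3m
  have habsq : |q / 2| = |q| / 2 := by rw [abs_div]; norm_num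
  have hq2 : 2 * m ^ 3 * Real.cos ϑ = |q| := by
    rw [hcosϑ, habsq]
    field_simp
  have hu : (2 * m * c) ^ 3 + p * (2 * m * c) = |q| := by
    rw [hpval, ← hq2, h3m]
    ring
  -- τ := z₃ + β/(2α)
  have hτ : z₃ + β / (2 * α) = -(Real.sign q) * (2 * m * c) := by
    rw [hz₃]; ring
  have hsign : (Real.sign q = 1 ∧ |q| = q) ∨ (Real.sign q = -1 ∧ |q| = -q) := by
    rcases lt_or_gt_of_ne hqne with h | h
    · exact Or.inr ⟨Real.sign_of_neg h, abs_of_neg h⟩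
    · exact Or.inl ⟨Real.sign_of_pos h, abs_of_pos h⟩
  have hcubic : (z₃ + β / (2 * α)) ^ 3 + p * (z₃ + β / (2 * α)) + q = 0 := by
    rw [hτ]
    rcases hsign with ⟨hs, ha⟩ | ⟨hs, ha⟩ <;> rw [hs] <;> nlinarith [hu]
  have hτ2 : -p < (z₃ + β / (2 * α)) ^ 2 := by
    rw [hτ]
    rcases hsign with ⟨hs, _⟩ | ⟨hs, _⟩ <;> rw [hs] <;> nlinarith
  -- distance-squared function
  set fd : ℝ → ℝ := fun x => (xb - x) ^ 2 + (yb - (α * x ^ 2 + β * x + γ)) ^ 2 with hfd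
  have hid : ∀ x : ℝ, fd x - fd z₃ =
      α ^ 2 * ((x - z₃) ^ 2 * ((x + z₃ + β / α) ^ 2 + 2 * (z₃ + β / (2 * α)) ^ 2 + 2 * p)
        + 4 * (x - z₃) * ((z₃ + β / (2 * α)) ^ 3 + p * (z₃ + β / (2 * α)) + q)) := by
    intro x
    simp only [hfd]
    rw [hp, hq]
    field_simp
    ring
  have key : ∀ x : ℝ, x ≠ z₃ → fd z₃ < fd x := by
    intro x hx
    have h2 : 0 < (x - z₃) ^ 2 := by
      have h3 : x - z₃ ≠ 0 := sub_ne_zero.2 hx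
      positivity
    have hαsq : 0 < α ^ 2 := by positivity
    have hQ : 0 < (x + z₃ + β / α) ^ 2 + 2 * (z₃ + β / (2 * α)) ^ 2 + 2 * p := by
      have := sq_nonneg (x + z₃ + β / α)
      linarith
    have h1 := hid x
    rw [hcubic] at h1
    have h1' : fd x - fd z₃ =
        α ^ 2 * ((x - z₃) ^ 2 *
          ((x + z₃ + β / α) ^ 2 + 2 * (z₃ + β / (2 * α)) ^ 2 + 2 * p)) := by
      linear_combination h1
    have h3 := mul_pos hαsq (mul_pos h2 hQ)
    rw [← h1'] at h3
    linarith
  ext w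
  simp only [Set.mem_setOf_eq, Set.mem_singleton_iff]
  constructor
  · rintro ⟨⟨x, rfl⟩, hmin⟩
    by_cases hx : x = z₃
    · rw [hx]
    · exfalso
      have h1 : Real.sqrt (fd x) ≤ Real.sqrt (fd z₃) := hmin z₃
      have h2 : Real.sqrt (fd z₃) < Real.sqrt (fd x) :=
        Real.sqrt_lt_sqrt (by simp only [hfd]; positivity) (key x hx)
      linarith
  · rintro rfl
    refine ⟨⟨z₃, rfl⟩, fun w => ?_⟩
    show Real.sqrt (fd z₃) ≤ Real.sqrt (fd w)
    apply Real.sqrt_le_sqrt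
    by_cases hw : w = z₃
    · rw [hw]
    · exact le_of_lt (key w hw)
end

section
/- Let α > 0, let t(x) = α‖x‖² for x ∈ ℝⁿ (with the Euclidean norm), let T = {(x, α‖x‖²) : x ∈ ℝⁿ} ⊆ ℝⁿ × ℝ (with the Euclidean product distance), and let ȳ ∈ ℝ with ȳ ≠ 0. If (1 − 2αȳ)³/(216α⁶) ≥ 0 (equivalently ȳ ≤ 1/(2α)), then the set of points of T nearest to (0, ȳ) is the singleton {(0, 0)}. -/
/-- projection of `(0, ȳ)` onto the graph of `t(x) = α‖x‖²`
(in `ℝⁿ × ℝ` with the Euclidean product distance) when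
`(1 − 2αȳ)³/(216α⁶) ≥ 0`: it is the singleton `{(0, 0)}`. -/
theorem stmt_16 (n : ℕ) (α : ℝ) (hα : 0 < α) (yb : ℝ) (hy : yb ≠ 0)
    (h : (1 - 2 * α * yb) ^ 3 / (216 * α ^ 6) ≥ 0) :
    {z : EuclideanSpace ℝ (Fin n) × ℝ |
        (∃ x : EuclideanSpace ℝ (Fin n), z = (x, α * ‖x‖ ^ 2)) ∧
        ∀ w : EuclideanSpace ℝ (Fin n),
          Real.sqrt (‖(0 : EuclideanSpace ℝ (Fin n)) - z.1‖ ^ 2 + (yb - z.2) ^ 2) ≤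
            Real.sqrt (‖(0 : EuclideanSpace ℝ (Fin n)) - w‖ ^ 2 +
              (yb - α * ‖w‖ ^ 2) ^ 2)} =
      {((0 : EuclideanSpace ℝ (Fin n)), (0 : ℝ))} := by
  have hden : (0:ℝ) < 216 * α ^ 6 := by positivity
  have hcube : (0:ℝ) ≤ (1 - 2 * α * yb) ^ 3 := by
    have := (div_nonneg_iff.mp h)
    rcases this with ⟨h1, _⟩ | ⟨_, h2⟩
    · exact h1
    · linarith
  have hkey : (0:ℝ) ≤ 1 - 2 * α * yb := by
    by_contra hneg
    push_neg at hneg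
    nlinarith [mul_pos (mul_pos (neg_pos.mpr hneg) (neg_pos.mpr hneg)) (neg_pos.mpr hneg)]
  ext z
  simp only [Set.mem_setOf_eq, Set.mem_singleton_iff]
  constructor
  · rintro ⟨⟨x, rfl⟩, hmin⟩
    have h0 := hmin 0
    simp only [norm_zero, sub_zero] at h0
    have hx2 : (0:ℝ) ≤ ‖x‖ ^ 2 + (yb - α * ‖x‖ ^ 2) ^ 2 := by positivity
    have h0' : Real.sqrt (‖x‖ ^ 2 + (yb - α * ‖x‖ ^ 2) ^ 2) ≤ Real.sqrt (yb ^ 2) := by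
      convert h0 using 3
      · simp
      · simp
    have hsq : ‖x‖ ^ 2 + (yb - α * ‖x‖ ^ 2) ^ 2 ≤ yb ^ 2 := by
      have := Real.sq_sqrt hx2 ▸ pow_le_pow_left₀ (Real.sqrt_nonneg _) h0' 2
      rwa [Real.sq_sqrt (sq_nonneg yb)] at this
    have hx0 : ‖x‖ ^ 2 = 0 := by
      nlinarith [mul_nonneg hkey (sq_nonneg ‖x‖), sq_nonneg (‖x‖^2), mul_pos hα hα]
    have hx : x = 0 := by
      have : ‖x‖ = 0 := by nlinarith [norm_nonneg x]
      exact norm_eq_zero.mp this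
    subst hx
    simp
  · rintro rfl
    refine ⟨⟨0, by simp⟩, fun w => ?_⟩
    simp only [norm_zero, sub_zero]
    apply Real.sqrt_le_sqrt
    rw [zero_sub, norm_neg]
    norm_num
    nlinarith [sq_nonneg ‖w‖, norm_nonneg w, sq_nonneg (‖w‖^2), mul_nonneg hkey (sq_nonneg ‖w‖)]
end

section
/- Let α > 0, let t(x) = α‖x‖² for x ∈ ℝⁿ (with the Euclidean norm), let T = {(x, α‖x‖²) : x ∈ ℝⁿ} ⊆ ℝⁿ × ℝ (with the Euclidean product distance), and let (x̄, ȳ) ∈ ℝⁿ × ℝ with x̄ ≠ 0 and ȳ ≠ α‖x̄‖². Set Δ := (1 − 2αȳ)³/(216α⁶) + ‖x̄‖²/(16α⁴). If Δ < 0, then the set of points of T nearest to (x̄, ȳ) is the singleton {(w₂·x̄/‖x̄‖, α·w₂²)}, where w₂ := 2·√((2αȳ − 1)/(6α²))·cos(ϑ/3) and ϑ := arccos((3√6/2)·α‖x̄‖/(2αȳ − 1)^{3/2}). -/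
open Real

/-!
Write `r = ‖x̄‖` and `P = 2αȳ - 1`. Since `‖x̄ - x‖ ≥ |r - ‖x‖|`, with equality exactly on the ray
through `x̄`, the problem reduces to minimising `g u = (r - u)² + (ȳ - αu²)²` over `u ≥ 0`. The
critical points of `g` are the roots of the cubic `2α²u³ = Pu + r`. The condition `Δ < 0` reads
`27α²r² < 2P³`, so `P > 0`, and Viète's trigonometric formula gives the root `w₂ ≥ 0` with
`2α²w₂² ≥ P`. Then `g u - g w₂ = (u - w₂)² (α²(u² + 2uw₂ + 3w₂²) - P)`, whose second factor is at
least `P / 2 > 0` for `u ≥ 0`, so `w₂` is the strict minimiser.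
-/

section RadialGraph

variable {E : Type*} [NormedAddCommGroup E]

theorem sq_norm_sub_norm_le_sq_norm_sub (x w : E) : (‖x‖ - ‖w‖) ^ 2 ≤ ‖x - w‖ ^ 2 := by
  simpa only [sq_abs] using pow_le_pow_left₀ (abs_nonneg _) (abs_norm_sub_norm_le x w) 2

variable [NormedSpace ℝ E] [StrictConvexSpace ℝ E]

theorem eq_div_norm_smul_of_sq_norm_sub_eq {x w : E} (hx : x ≠ 0)
    (h : ‖x - w‖ ^ 2 = (‖x‖ - ‖w‖) ^ 2) : w = (‖w‖ / ‖x‖) • x := by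
  have hray : SameRay ℝ x w := by
    rw [sameRay_iff_norm_sub, ← abs_norm (x - w), ← sq_eq_sq_iff_abs_eq_abs, h]
  rw [div_eq_inv_mul, mul_smul, ← sameRay_iff_norm_smul_eq.mp hray, smul_smul,
    inv_mul_cancel₀ (norm_ne_zero_iff.mpr hx), one_smul]

theorem nearest_points_radial_graph_eq_singleton (φ : ℝ → ℝ)
    {xb : E} (hx : xb ≠ 0) (yb : ℝ) {u₀ : ℝ} (hu₀ : 0 ≤ u₀)
    (hmin : ∀ u, 0 ≤ u → u ≠ u₀ →
      (‖xb‖ - u₀) ^ 2 + (yb - φ u₀) ^ 2 < (‖xb‖ - u) ^ 2 + (yb - φ u) ^ 2) :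
    {z : E × ℝ | (∃ x : E, z = (x, φ ‖x‖)) ∧
        ∀ w : E, √(‖xb - z.1‖ ^ 2 + (yb - z.2) ^ 2) ≤ √(‖xb - w‖ ^ 2 + (yb - φ ‖w‖) ^ 2)} =
      {((u₀ / ‖xb‖) • xb, φ u₀)} := by
  set p := (u₀ / ‖xb‖) • xb
  have hp : ‖p‖ = u₀ := by
    rw [norm_smul, norm_div, norm_norm, Real.norm_of_nonneg hu₀,
      div_mul_cancel₀ _ (norm_ne_zero_iff.mpr hx)]
  have hxp : ‖xb - p‖ ^ 2 = (‖xb‖ - u₀) ^ 2 := by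
    rw [(SameRay.sameRay_nonneg_smul_right xb (by positivity)).norm_sub, sq_abs, hp]
  have hle : ∀ u, 0 ≤ u → (‖xb‖ - u₀) ^ 2 + (yb - φ u₀) ^ 2 ≤ (‖xb‖ - u) ^ 2 + (yb - φ u) ^ 2 :=
    fun u hu ↦ (eq_or_ne u u₀).elim (fun h ↦ h ▸ le_rfl) fun h ↦ (hmin u hu h).le
  ext z
  simp only [Set.mem_ofPred_eq, Set.mem_singleton_iff]
  constructor
  · rintro ⟨⟨x, rfl⟩, hnear⟩
    have hx' : ‖xb - x‖ ^ 2 + (yb - φ ‖x‖) ^ 2 ≤ (‖xb‖ - u₀) ^ 2 + (yb - φ u₀) ^ 2 := by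
      rw [← hxp, ← hp]
      exact (sqrt_le_sqrt_iff (by positivity)).mp (hnear p)
    have hlow := sq_norm_sub_norm_le_sq_norm_sub xb x
    have hnorm : ‖x‖ = u₀ := by
      by_contra hne
      linarith [hmin ‖x‖ (norm_nonneg x) hne]
    rw [hnorm] at hx' hlow
    have hxp_eq : x = p :=
      (eq_div_norm_smul_of_sq_norm_sub_eq hx (by rw [hnorm]; linarith)).trans (by rw [hnorm])
    rw [hxp_eq, hp]
  · rintro rfl
    refine ⟨⟨p, by rw [hp]⟩, fun w ↦ sqrt_le_sqrt ?_⟩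
    rw [hxp]
    linarith [hle ‖w‖ (norm_nonneg w), sq_norm_sub_norm_le_sq_norm_sub xb w]

end RadialGraph

theorem parabola_sq_dist_lt_of_cubic {α yb r w : ℝ} (hP : 0 < 2 * α * yb - 1)
    (hcub : 2 * α ^ 2 * w ^ 3 = (2 * α * yb - 1) * w + r) (hw : 0 ≤ w)
    (hwP : 2 * α * yb - 1 ≤ 2 * α ^ 2 * w ^ 2) {u : ℝ} (hu : 0 ≤ u) (hne : u ≠ w) :
    (r - w) ^ 2 + (yb - α * w ^ 2) ^ 2 < (r - u) ^ 2 + (yb - α * u ^ 2) ^ 2 := by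
  have hfactor : (r - u) ^ 2 + (yb - α * u ^ 2) ^ 2 - ((r - w) ^ 2 + (yb - α * w ^ 2) ^ 2) =
      (u - w) ^ 2 * (α ^ 2 * (u ^ 2 + 2 * u * w + 3 * w ^ 2) - (2 * α * yb - 1)) := by
    linear_combination 2 * (u - w) * hcub
  have hpos : 0 < α ^ 2 * (u ^ 2 + 2 * u * w + 3 * w ^ 2) - (2 * α * yb - 1) := by
    have huw : 0 ≤ α ^ 2 * (u ^ 2 + 2 * u * w) := by positivity
    linarith
  linarith [mul_pos (sq_pos_of_ne_zero (sub_ne_zero.mpr hne)) hpos]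

theorem two_mul_cos_arccos_div_three_cubic {A : ℝ} (hA₀ : -1 ≤ A) (hA₁ : A ≤ 1) (s : ℝ) :
    (2 * s * cos (arccos A / 3)) ^ 3 =
      3 * s ^ 2 * (2 * s * cos (arccos A / 3)) + 2 * s ^ 3 * A := by
  have h := cos_three_mul (arccos A / 3)
  rw [mul_div_cancel₀ _ three_ne_zero, cos_arccos hA₀ hA₁] at h
  linear_combination (-2 * s ^ 3) * h

theorem sqrt_three_div_two_le_cos_arccos_div_three {A : ℝ} (hA : 0 ≤ A) :
    √3 / 2 ≤ cos (arccos A / 3) := by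
  rw [← cos_pi_div_six]
  apply cos_le_cos_of_nonneg_of_le_pi (by linarith [arccos_nonneg A]) (by linarith [pi_pos])
  linarith [arccos_le_pi_div_two.mpr hA]

theorem parabola_cubic_trig_root {α P r w : ℝ} (hα : 0 < α) (hr : 0 ≤ r) (hP : 0 < P)
    (hdisc : 27 * α ^ 2 * r ^ 2 ≤ 2 * P ^ 3)
    (hw : w = 2 * √(P / (6 * α ^ 2)) *
      cos (arccos ((3 * √6 / 2) * α * r / P ^ ((3 : ℝ) / 2)) / 3)) :
    2 * α ^ 2 * w ^ 3 = P * w + r ∧ 0 ≤ w ∧ P ≤ 2 * α ^ 2 * w ^ 2 := by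
  set s := √(P / (6 * α ^ 2))
  have hs : 0 < s := sqrt_pos.mpr (by positivity)
  have hs2 : 6 * α ^ 2 * s ^ 2 = P := by
    rw [sq_sqrt (by positivity)]
    field_simp
  have hP32 : P ^ ((3 : ℝ) / 2) = 6 * √6 * α ^ 3 * s ^ 3 := by
    rw [show (3 : ℝ) / 2 = 1 + 1 / 2 by norm_num, rpow_add hP, rpow_one, ← sqrt_eq_rpow, ← hs2,
      show 6 * α ^ 2 * s ^ 2 = 6 * (α * s) ^ 2 by ring, sqrt_mul (by norm_num),
      sqrt_sq (by positivity)]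
    ring
  have hA_eq : (3 * √6 / 2) * α * r / P ^ ((3 : ℝ) / 2) = r / (4 * α ^ 2 * s ^ 3) := by
    rw [hP32]
    field_simp
    ring
  rw [hA_eq] at hw
  set A := r / (4 * α ^ 2 * s ^ 3) with hA
  have hA₀ : 0 ≤ A := by positivity
  have hA₁ : A ≤ 1 := by
    rw [div_le_one (by positivity), ← pow_le_pow_iff_left₀ hr (by positivity) two_ne_zero]
    refine le_of_mul_le_mul_left ?_ (by positivity : 0 < 27 * α ^ 2)
    rw [← hs2] at hdisc
    linear_combination hdisc
  have hr4 : 4 * α ^ 2 * s ^ 3 * A = r := by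
    rw [hA]
    field_simp
  set c := cos (arccos A / 3)
  have hc : √3 / 2 ≤ c := sqrt_three_div_two_le_cos_arccos_div_three hA₀
  have hc2 : 3 / 4 ≤ c ^ 2 := by nlinarith [sq_sqrt (zero_le_three : (0 : ℝ) ≤ 3), sqrt_nonneg 3]
  have hcub := two_mul_cos_arccos_div_three_cubic (by linarith) hA₁ s
  subst hw
  refine ⟨by linear_combination (2 * α ^ 2) * hcub + (2 * s * c) * hs2 + hr4, ?_, ?_⟩
  · exact mul_nonneg (by positivity) (le_trans (by positivity) hc)
  · nlinarith [mul_le_mul_of_nonneg_left hc2 (by positivity : (0 : ℝ) ≤ 8 * α ^ 2 * s ^ 2)]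

theorem stmt_19_general (n : ℕ) (α : ℝ) (hα : 0 < α)
    (xb : EuclideanSpace ℝ (Fin n)) (yb : ℝ) (hx : xb ≠ 0)
    (Δ ϑ w₂ : ℝ)
    (hΔ : Δ = (1 - 2 * α * yb) ^ 3 / (216 * α ^ 6) + ‖xb‖ ^ 2 / (16 * α ^ 4))
    (hϑ : ϑ = Real.arccos ((3 * Real.sqrt 6 / 2) * α * ‖xb‖ /
        (2 * α * yb - 1) ^ ((3 : ℝ) / 2)))
    (hw₂ : w₂ = 2 * Real.sqrt ((2 * α * yb - 1) / (6 * α ^ 2)) * Real.cos (ϑ / 3))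
    (hcase : Δ < 0) :
    {z : EuclideanSpace ℝ (Fin n) × ℝ |
        (∃ x : EuclideanSpace ℝ (Fin n), z = (x, α * ‖x‖ ^ 2)) ∧
        ∀ w : EuclideanSpace ℝ (Fin n),
          Real.sqrt (‖xb - z.1‖ ^ 2 + (yb - z.2) ^ 2) ≤
            Real.sqrt (‖xb - w‖ ^ 2 + (yb - α * ‖w‖ ^ 2) ^ 2)} =
      {((w₂ / ‖xb‖) • xb, α * w₂ ^ 2)} := by
  have hdisc : 27 * α ^ 2 * ‖xb‖ ^ 2 < 2 * (2 * α * yb - 1) ^ 3 := by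
    have hΔ' : Δ = (27 * α ^ 2 * ‖xb‖ ^ 2 - 2 * (2 * α * yb - 1) ^ 3) / (432 * α ^ 6) := by
      rw [hΔ]
      field_simp
      ring
    rwa [hΔ', div_lt_iff₀ (by positivity), zero_mul, sub_neg] at hcase
  have hP : 0 < 2 * α * yb - 1 := by
    refine (Odd.pow_pos_iff (n := 3) (by decide)).mp ?_
    linarith [(by positivity : 0 ≤ 27 * α ^ 2 * ‖xb‖ ^ 2)]
  obtain ⟨hcub, hw, hwP⟩ :=
    parabola_cubic_trig_root hα (norm_nonneg xb) hP hdisc.le (hϑ ▸ hw₂)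
  exact nearest_points_radial_graph_eq_singleton (fun u ↦ α * u ^ 2) hx yb hw
    fun u hu hne ↦ parabola_sq_dist_lt_of_cubic hP hcub hw hwP hu hne

/-- projection of `(x̄, ȳ)` (with `x̄ ≠ 0`, `ȳ ≠ α‖x̄‖²`) onto the
graph of `t(x) = α‖x‖²` when `Δ < 0`: the singleton `{(w₂·x̄/‖x̄‖, αw₂²)}`. -/
theorem stmt_19 (n : ℕ) (α : ℝ) (hα : 0 < α)
    (xb : EuclideanSpace ℝ (Fin n)) (yb : ℝ) (hx : xb ≠ 0)
    (hy : yb ≠ α * ‖xb‖ ^ 2) (Δ ϑ w₂ : ℝ)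
    (hΔ : Δ = (1 - 2 * α * yb) ^ 3 / (216 * α ^ 6) + ‖xb‖ ^ 2 / (16 * α ^ 4))
    (hϑ : ϑ = Real.arccos ((3 * Real.sqrt 6 / 2) * α * ‖xb‖ /
        (2 * α * yb - 1) ^ ((3 : ℝ) / 2)))
    (hw₂ : w₂ = 2 * Real.sqrt ((2 * α * yb - 1) / (6 * α ^ 2)) * Real.cos (ϑ / 3))
    (hcase : Δ < 0) :
    {z : EuclideanSpace ℝ (Fin n) × ℝ |
        (∃ x : EuclideanSpace ℝ (Fin n), z = (x, α * ‖x‖ ^ 2)) ∧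
        ∀ w : EuclideanSpace ℝ (Fin n),
          Real.sqrt (‖xb - z.1‖ ^ 2 + (yb - z.2) ^ 2) ≤
            Real.sqrt (‖xb - w‖ ^ 2 + (yb - α * ‖w‖ ^ 2) ^ 2)} =
      {((w₂ / ‖xb‖) • xb, α * w₂ ^ 2)} :=
  stmt_19_general n α hα xb yb hx Δ ϑ w₂ hΔ hϑ hw₂ hcase
end
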